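/- arXiv:2305.11645 — 4 statements merged into one kernel-verified Lean document; each statement's English description precedes it below -/
import Mathlib

section
/- Let $d \in \mathbb{N}$, $\lambda > 0$, $\alpha > 1/2$ with $2\alpha\lambda > 1$, $b \ge 2$, $m \ge 0$, product weights $\gamma_{\mathfrak{u}} = \prod_{j\in\mathfrak{u}} \gamma_j$ with each $\gamma_j > 0$, and reduction indices $w_1 \le w_2 \le \cdots \le w_d$ in $\mathbb{N}_0$. Then $\sum_{\emptyset \ne \mathfrak{u} \subseteq [d]} \gamma_{\mathfrak{u}}^{\lambda} \frac{2(2\zeta(2\alpha\lambda))^{|\mathfrak{u}|}}{b^{\max\{0, m - \max_{j\in\mathfrak{u}} w_j\}}} \le b^{-m}\left(-1 + 2\prod_{j=1}^{d}\left(1 + \gamma_j^{\lambda} \, 2\zeta(2\alpha\lambda)\, b^{\min\{m, w_j\}}\right)\right)$. -/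
/-!
Termwise, `b ^ -(m - max_{j ∈ u} w_j) = b ^ -m * b ^ min(m, max_{j ∈ u} w_j)`, and the last
factor is at most `∏_{j ∈ u} b ^ min(m, w_j)` since `b ≥ 1`. The sum is therefore at most
`2 b ^ -m ∑_{u ≠ ∅} ∏_{j ∈ u} x_j = 2 b ^ -m (∏_j (1 + x_j) - 1)` with
`x_j = γ_j ^ λ 2 ζ(2αλ) b ^ min(m, w_j)`.
-/

open Finset

theorem Finset.sum_powerset_ne_empty_prod {ι R : Type*} [DecidableEq ι] [CommRing R]
    (s : Finset ι) (f : ι → R) :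
    ∑ t ∈ s.powerset.filter (· ≠ ∅), ∏ i ∈ t, f i = ∏ i ∈ s, (1 + f i) - 1 := by
  rw [prod_one_add, filter_ne', ← add_sum_erase _ _ (empty_mem_powerset s), prod_empty]
  ring

theorem Finset.min_sup_le_sum_min {ι : Type*} (m : ℕ) (s : Finset ι) (w : ι → ℕ) :
    min m (s.sup w) ≤ ∑ j ∈ s, min m (w j) := by
  rcases s.eq_empty_or_nonempty with rfl | hs
  · simp
  obtain ⟨j, hj, hsup⟩ := s.exists_mem_eq_sup hs w
  rw [hsup]
  exact single_le_sum (f := fun i => min m (w i)) (fun i _ => Nat.zero_le _) hj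

theorem inv_pow_sub_le_inv_pow_mul_pow {K : Type*} [Field K] [LinearOrder K]
    [IsStrictOrderedRing K] {b : K} (hb : 1 ≤ b) {m k n : ℕ} (h : min m k ≤ n) :
    (b ^ (m - k))⁻¹ ≤ (b ^ m)⁻¹ * b ^ n := by
  have hb0 : b ≠ 0 := (zero_lt_one.trans_le hb).ne'
  have hsplit : b ^ m = b ^ (m - k) * b ^ min m k := by
    rw [← pow_add]
    congr 1
    omega
  calc (b ^ (m - k))⁻¹ = (b ^ m)⁻¹ * b ^ min m k := by
        rw [hsplit, mul_inv, mul_assoc, inv_mul_cancel₀ (pow_ne_zero _ hb0), mul_one]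
    _ ≤ (b ^ m)⁻¹ * b ^ n := by
        gcongr

theorem rpow_prod_mul_pow_card_div_le {ι : Type*} (u : Finset ι) {γ : ι → ℝ}
    (hγ : ∀ j ∈ u, 0 ≤ γ j) (lam : ℝ) {c : ℝ} (hc : 0 ≤ c) {b : ℝ} (hb : 1 ≤ b) (m : ℕ)
    (w : ι → ℕ) :
    (∏ j ∈ u, γ j) ^ lam * c ^ u.card / b ^ (m - u.sup w)
      ≤ (b ^ m)⁻¹ * ∏ j ∈ u, γ j ^ lam * c * b ^ min m (w j) := by
  have hcoef : 0 ≤ (∏ j ∈ u, γ j) ^ lam * c ^ u.card := by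
    have := prod_nonneg hγ
    positivity
  calc (∏ j ∈ u, γ j) ^ lam * c ^ u.card / b ^ (m - u.sup w)
      ≤ (∏ j ∈ u, γ j) ^ lam * c ^ u.card * ((b ^ m)⁻¹ * b ^ ∑ j ∈ u, min m (w j)) := by
        rw [div_eq_mul_inv]
        exact mul_le_mul_of_nonneg_left
          (inv_pow_sub_le_inv_pow_mul_pow hb (min_sup_le_sum_min m u w)) hcoef
    _ = (b ^ m)⁻¹ * ∏ j ∈ u, γ j ^ lam * c * b ^ min m (w j) := by
        rw [prod_mul_distrib, prod_mul_distrib, prod_const, prod_pow_eq_pow_sum,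
          Real.finsetProd_rpow u γ hγ]
        ring

theorem stmt2_general (d : ℕ) (lam α : ℝ)
    (b : ℕ) (hb : 2 ≤ b) (m : ℕ) (γ : ℕ → ℝ) (hγ : ∀ j, 0 < γ j)
    (w : ℕ → ℕ) :
    ∑ 𝔲 ∈ (Finset.Icc 1 d).powerset.filter (· ≠ ∅),
      (∏ j ∈ 𝔲, γ j) ^ lam * (2 * (2 * (∑' n : ℕ, (1:ℝ)/((n:ℝ)+1) ^ (2*α*lam))) ^ 𝔲.card)
        / (b:ℝ) ^ (m - 𝔲.sup w)
    ≤ ((b:ℝ) ^ m)⁻¹ *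
      (-1 + 2 * ∏ j ∈ Finset.Icc 1 d,
        (1 + (γ j) ^ lam * (2 * (∑' n : ℕ, (1:ℝ)/((n:ℝ)+1) ^ (2*α*lam))) *
          (b:ℝ) ^ (min m (w j)))) := by
  set Z : ℝ := ∑' n : ℕ, (1:ℝ)/((n:ℝ)+1) ^ (2*α*lam)
  set x : ℕ → ℝ := fun j => γ j ^ lam * (2 * Z) * (b:ℝ) ^ min m (w j)
  have hZ : 0 ≤ 2 * Z := mul_nonneg zero_le_two (tsum_nonneg fun n => by positivity)
  have hb1 : (1:ℝ) ≤ b := by exact_mod_cast one_le_two.trans hb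
  calc _ ≤ ∑ 𝔲 ∈ (Icc 1 d).powerset.filter (· ≠ ∅), 2 * (((b:ℝ) ^ m)⁻¹ * ∏ j ∈ 𝔲, x j) :=
        sum_le_sum fun 𝔲 _ => by
          rw [mul_left_comm, mul_div_assoc]
          exact mul_le_mul_of_nonneg_left
            (rpow_prod_mul_pow_card_div_le 𝔲 (fun j _ => (hγ j).le) lam hZ hb1 m w) zero_le_two
    _ = ((b:ℝ) ^ m)⁻¹ * (2 * (∏ j ∈ Icc 1 d, (1 + x j) - 1)) := by
        rw [← mul_sum, ← mul_sum, sum_powerset_ne_empty_prod]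
        ring
    _ ≤ _ := mul_le_mul_of_nonneg_left (by linarith) (by positivity)

theorem stmt2 (d : ℕ) (lam α : ℝ) (hlam : 0 < lam) (hα : 1/2 < α) (h2 : 1 < 2*α*lam)
    (b : ℕ) (hb : 2 ≤ b) (m : ℕ) (γ : ℕ → ℝ) (hγ : ∀ j, 0 < γ j)
    (w : ℕ → ℕ) (hw : ∀ i j, i ≤ j → w i ≤ w j) :
    ∑ 𝔲 ∈ (Finset.Icc 1 d).powerset.filter (· ≠ ∅),
      (∏ j ∈ 𝔲, γ j) ^ lam * (2 * (2 * (∑' n : ℕ, (1:ℝ)/((n:ℝ)+1) ^ (2*α*lam))) ^ 𝔲.card)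
        / (b:ℝ) ^ (m - 𝔲.sup w)
    ≤ ((b:ℝ) ^ m)⁻¹ *
      (-1 + 2 * ∏ j ∈ Finset.Icc 1 d,
        (1 + (γ j) ^ lam * (2 * (∑' n : ℕ, (1:ℝ)/((n:ℝ)+1) ^ (2*α*lam))) *
          (b:ℝ) ^ (min m (w j)))) :=
  stmt2_general d lam α b hb m γ hγ w
end

section
/- Let $b \ge 2$ be an integer. Then for any integers $L \ge 0$ and $r \ge 1$, $\sum_{\ell = L}^{\infty} b^{-\ell} \binom{\ell + r - 1}{r-1} \le b^{-L} \binom{L + r - 1}{r-1} \left(\frac{b}{b-1}\right)^{r}$. -/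
lemma asc_mul_le (L l k : ℕ) :
    k.factorial * (L + l + 1).ascFactorial k ≤
      (L + 1).ascFactorial k * (l + 1).ascFactorial k := by
  induction k with
  | zero => simp
  | succ k ih =>
      rw [Nat.factorial_succ, Nat.ascFactorial_succ, Nat.ascFactorial_succ,
        Nat.ascFactorial_succ]
      calc (k + 1) * k.factorial * ((L + l + 1 + k) * (L + l + 1).ascFactorial k)
          ≤ ((L + 1 + k) * (l + 1 + k)) *
              ((L + 1).ascFactorial k * (l + 1).ascFactorial k) := by
            have h1 : (k + 1) * (L + l + 1 + k) ≤ (L + 1 + k) * (l + 1 + k) := by nlinarith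
            calc (k + 1) * k.factorial * ((L + l + 1 + k) * (L + l + 1).ascFactorial k)
                = ((k + 1) * (L + l + 1 + k)) * (k.factorial * (L + l + 1).ascFactorial k) := by
                  ring
              _ ≤ ((L + 1 + k) * (l + 1 + k)) *
                    ((L + 1).ascFactorial k * (l + 1).ascFactorial k) :=
                  Nat.mul_le_mul h1 ih
        _ = (L + 1 + k) * (L + 1).ascFactorial k * ((l + 1 + k) * (l + 1).ascFactorial k) := by
            ring

lemma choose_add_le (L l k : ℕ) :
    (L + l + k).choose k ≤ (L + k).choose k * (l + k).choose k := by
  have h := asc_mul_le L l k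
  rw [Nat.ascFactorial_eq_factorial_mul_choose, Nat.ascFactorial_eq_factorial_mul_choose,
    Nat.ascFactorial_eq_factorial_mul_choose] at h
  have hk : 0 < k.factorial * k.factorial := Nat.mul_pos k.factorial_pos k.factorial_pos
  have : k.factorial * k.factorial * (L + l + k).choose k ≤
      k.factorial * k.factorial * ((L + k).choose k * (l + k).choose k) := by
    calc k.factorial * k.factorial * (L + l + k).choose k
        = k.factorial * (k.factorial * (L + l + k).choose k) := by ring
      _ ≤ k.factorial * (L + k).choose k * (k.factorial * (l + k).choose k) := h
      _ = k.factorial * k.factorial * ((L + k).choose k * (l + k).choose k) := by ring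
  exact Nat.le_of_mul_le_mul_left this hk

theorem stmt7 (b : ℕ) (hb : 2 ≤ b) (L r : ℕ) (hr : 1 ≤ r) :
    ∑' ℓ : ℕ, (1/(b:ℝ)^(L + ℓ)) * (((L + ℓ + r - 1).choose (r-1) : ℕ) : ℝ) ≤
    (1/(b:ℝ)^L) * (((L + r - 1).choose (r-1) : ℕ) : ℝ) * ((b:ℝ)/((b:ℝ)-1))^r := by
  obtain ⟨k, rfl⟩ : ∃ k, r = k + 1 := ⟨r - 1, by omega⟩
  have hb1 : (1:ℝ) < b := by exact_mod_cast hb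
  have hb0 : (0:ℝ) < b := by linarith
  set x : ℝ := 1 / b with hx
  have hx0 : 0 < x := by positivity
  have hx1 : x < 1 := by rw [hx, div_lt_one hb0]; exact hb1
  have hxn : ‖x‖ < 1 := by rw [Real.norm_eq_abs, abs_of_pos hx0]; exact hx1
  have hsum : Summable (fun ℓ : ℕ ↦ ((ℓ + k).choose k : ℝ) * x ^ ℓ) :=
    summable_choose_mul_geometric_of_norm_lt_one k hxn
  have key : ∀ ℓ : ℕ, (1/(b:ℝ)^(L + ℓ)) * (((L + ℓ + (k+1) - 1).choose (k+1-1) : ℕ) : ℝ) ≤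
      (1/(b:ℝ)^L) * (((L + (k+1) - 1).choose (k+1-1) : ℕ) : ℝ) *
        (((ℓ + k).choose k : ℝ) * x ^ ℓ) := by
    intro ℓ
    have e1 : L + ℓ + (k+1) - 1 = L + ℓ + k := by omega
    have e2 : L + (k+1) - 1 = L + k := by omega
    have e3 : k + 1 - 1 = k := by omega
    rw [e1, e2, e3]
    have hc : ((L + ℓ + k).choose k : ℝ) ≤ ((L + k).choose k : ℝ) * ((ℓ + k).choose k : ℝ) := by
      exact_mod_cast choose_add_le L ℓ k
    have hp : (1:ℝ)/(b:ℝ)^(L+ℓ) = (1/(b:ℝ)^L) * x ^ ℓ := by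
      rw [hx, pow_add]
      field_simp
      rw [← mul_pow, mul_one_div_cancel (ne_of_gt hb0), one_pow]
    rw [hp]
    have h1 : (0:ℝ) ≤ (1/(b:ℝ)^L) * x ^ ℓ := by positivity
    calc (1/(b:ℝ)^L) * x ^ ℓ * ((L + ℓ + k).choose k : ℝ)
        ≤ (1/(b:ℝ)^L) * x ^ ℓ * (((L + k).choose k : ℝ) * ((ℓ + k).choose k : ℝ)) :=
          mul_le_mul_of_nonneg_left hc h1
      _ = (1/(b:ℝ)^L) * ((L + k).choose k : ℝ) * (((ℓ + k).choose k : ℝ) * x ^ ℓ) := by ring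
  have hsum2 : Summable (fun ℓ : ℕ ↦ (1/(b:ℝ)^L) * (((L + (k+1) - 1).choose (k+1-1) : ℕ) : ℝ) *
      (((ℓ + k).choose k : ℝ) * x ^ ℓ)) := hsum.mul_left _
  have hsum1 : Summable (fun ℓ : ℕ ↦ (1/(b:ℝ)^(L + ℓ)) *
      (((L + ℓ + (k+1) - 1).choose (k+1-1) : ℕ) : ℝ)) := by
    apply Summable.of_nonneg_of_le (fun ℓ ↦ by positivity) key hsum2
  calc ∑' ℓ : ℕ, (1/(b:ℝ)^(L + ℓ)) * (((L + ℓ + (k+1) - 1).choose (k+1-1) : ℕ) : ℝ)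
      ≤ ∑' ℓ : ℕ, (1/(b:ℝ)^L) * (((L + (k+1) - 1).choose (k+1-1) : ℕ) : ℝ) *
          (((ℓ + k).choose k : ℝ) * x ^ ℓ) := Summable.tsum_le_tsum key hsum1 hsum2
    _ = (1/(b:ℝ)^L) * (((L + (k+1) - 1).choose (k+1-1) : ℕ) : ℝ) *
          ∑' ℓ : ℕ, (((ℓ + k).choose k : ℝ) * x ^ ℓ) := tsum_mul_left
    _ = (1/(b:ℝ)^L) * (((L + (k+1) - 1).choose (k+1-1) : ℕ) : ℝ) *
          ((b:ℝ)/((b:ℝ)-1))^(k+1) := by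
        rw [tsum_choose_mul_geometric_of_norm_lt_one k hxn]
        have hbne : (b:ℝ) ≠ 0 := by linarith
        have h1 : (1:ℝ) - x = ((b:ℝ) - 1)/b := by rw [hx]; field_simp
        rw [h1, div_pow, one_div_div, ← div_pow]
end

section
/- Fix integers $b \ge 2$, $m, t \ge 0$, $s^* \ge 1$ with $t \le m$ and $m - t + 1 - s^* \ge 0$, and nonnegative integers $w_1, \ldots, w_{s^*} \le m$. Then $\sum b^{-a_1 - \cdots - a_{s^*}} \le \frac{b^t}{b^{m+1}} \left(\frac{b}{b-1}\right)^{s^*} b^{s^*} \binom{m-t}{s^*-1}$, where the sum ranges over tuples $(a_1,\ldots,a_{s^*})$ with $1 \le a_j \le m - w_j$ and $m - t + 1 \le a_1 + \cdots + a_{s^*} \le m - t + s^*$. -/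
lemma aux_ratio (k n : ℕ) (hkn : k ≤ n) : ∀ i, (n + i).choose k ≤ (k + i).choose i * n.choose k := by
  intro i
  induction i with
  | zero => simp
  | succ i ih =>
    have hpos : 0 < (n + i + 1 - k) * (i + 1) := Nat.mul_pos (by omega) (by omega)
    refine Nat.le_of_mul_le_mul_right ?_ hpos
    have h1 : (n + i + 1).choose k * (n + i + 1 - k) = (n + i).choose k * (n + i + 1) :=
      ((Nat.choose_mul_succ_eq (n + i) k)).symm
    have h2 : (k + i + 1).choose (i + 1) * (i + 1) = (k + i).choose i * (k + i + 1) := by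
      have h := Nat.add_one_mul_choose_eq (k + i) i
      rw [← h]; ring
    calc (n + i + 1).choose k * ((n + i + 1 - k) * (i + 1))
        = ((n + i + 1).choose k * (n + i + 1 - k)) * (i + 1) := by ring
      _ = (n + i).choose k * (n + i + 1) * (i + 1) := by rw [h1]
      _ ≤ ((k + i).choose i * n.choose k) * ((n + i + 1) * (i + 1)) := by
          rw [mul_assoc]; exact Nat.mul_le_mul_right _ ih
      _ ≤ ((k + i).choose i * n.choose k) * ((k + i + 1) * (n + i + 1 - k)) := by
          refine Nat.mul_le_mul_left _ ?_
          have hd : n + i + 1 - k = (n - k) + i + 1 := by omega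
          have hn : n = k + (n - k) := by omega
          rw [hd]
          nlinarith [hn]
      _ = ((k + i).choose i * (k + i + 1)) * (n.choose k * (n + i + 1 - k)) := by ring
      _ = ((k + i + 1).choose (i + 1) * (i + 1)) * (n.choose k * (n + i + 1 - k)) := by rw [h2]
      _ = ((k + i + 1).choose (i + 1) * n.choose k) * ((n + i + 1 - k) * (i + 1)) := by ring

lemma list_sum_range (n : ℕ) (f : ℕ → ℕ) : ((List.range n).map f).sum = ∑ i ∈ Finset.range n, f i := rfl

lemma aux_adt_len : ∀ k n : ℕ, (List.Nat.antidiagonalTuple k n).length ≤ (n + k - 1).choose n := by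
  intro k
  induction k with
  | zero => intro n; cases n <;> simp [List.Nat.antidiagonalTuple]
  | succ k ih =>
    intro n
    rw [List.Nat.antidiagonalTuple, List.length_flatMap]
    have hanti : List.Nat.antidiagonal n = (List.range (n + 1)).map fun i => (i, n - i) := rfl
    rw [hanti, List.map_map]
    simp only [Function.comp_def, List.length_map]
    rw [list_sum_range]
    have hrefl := Finset.sum_range_reflect (fun j => (List.Nat.antidiagonalTuple k j).length) (n + 1)
    calc ∑ i ∈ Finset.range (n + 1), (List.Nat.antidiagonalTuple k (n - i)).length
        = ∑ j ∈ Finset.range (n + 1), (List.Nat.antidiagonalTuple k j).length := by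
          rw [← hrefl]
          refine Finset.sum_congr rfl fun j hj => ?_
          simp only [Finset.mem_range] at hj
          have : n - j = n + 1 - 1 - j := by omega
          rw [this]
      _ ≤ ∑ j ∈ Finset.range (n + 1), (j + k - 1).choose j :=
          Finset.sum_le_sum fun j _ => ih j
      _ ≤ (n + (k + 1) - 1).choose n := by
          rcases Nat.eq_zero_or_pos k with hk | hk
          · subst hk
            have h0 : ∀ j ∈ Finset.range (n + 1), (j + 0 - 1).choose j = if j = 0 then 1 else 0 := by
              intro j _
              rcases Nat.eq_zero_or_pos j with rfl | hj
              · simp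
              · simp only [if_neg (by omega : ¬ j = 0)]
                exact Nat.choose_eq_zero_of_lt (by omega)
            rw [Finset.sum_congr rfl h0]
            simp
          · obtain ⟨k', rfl⟩ : ∃ k', k = k' + 1 := ⟨k - 1, by omega⟩
            have h1 : ∀ j ∈ Finset.range (n + 1), (j + (k' + 1) - 1).choose j = (j + k').choose k' := by
              intro j _
              have he : j + (k' + 1) - 1 = j + k' := by omega
              have hs := Nat.choose_symm (show j ≤ j + k' by omega)
              have he2 : j + k' - j = k' := by omega
              rw [he2] at hs
              rw [he, ← hs]
            rw [Finset.sum_congr rfl h1]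
            have h2 : ∑ x ∈ Finset.Icc k' (n + k'), x.choose k'
                = ∑ j ∈ Finset.range (n + 1), (j + k').choose k' := by
              rw [← Finset.Ico_add_one_right_eq_Icc, Finset.sum_Ico_eq_sum_range]
              have he : n + k' + 1 - k' = n + 1 := by omega
              rw [he]
              exact Finset.sum_congr rfl fun j _ => by rw [Nat.add_comm k' j]
            rw [← h2, Nat.sum_Icc_choose]
            have hs := Nat.choose_symm (show n ≤ n + k' + 1 by omega)
            have he2 : n + k' + 1 - n = k' + 1 := by omega
            rw [he2] at hs
            have he : n + (k' + 1 + 1) - 1 = n + k' + 1 := by omega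
            rw [he, ← hs]

lemma aux_adt_card (k n : ℕ) : (Finset.Nat.antidiagonalTuple k n).card ≤ (n + k - 1).choose n :=
  aux_adt_len k n


lemma aux_choose_two_pow (N r : ℕ) : N.choose r ≤ 2 ^ N := by
  rcases le_or_gt r N with h | h
  · calc N.choose r ≤ ∑ i ∈ Finset.range (N + 1), N.choose i :=
        Finset.single_le_sum (fun i _ => Nat.zero_le _) (Finset.mem_range.mpr (by omega))
      _ = 2 ^ N := Nat.sum_range_choose N
  · rw [Nat.choose_eq_zero_of_lt h]; exact Nat.zero_le _

lemma aux_geom (s : ℕ) : ∑ i ∈ Finset.range s, 2 ^ i ≤ 2 ^ s := by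
  induction s with
  | zero => simp
  | succ s ih =>
    rw [Finset.sum_range_succ, pow_succ]
    omega

theorem stmt10 (b m t sstar : ℕ) (hb : 2 ≤ b) (hstar : 1 ≤ sstar) (ht : t ≤ m)
    (hmt : sstar ≤ m - t + 1) (w : Fin sstar → ℕ) (hw : ∀ j, w j ≤ m) :
    ∑ a ∈ (Fintype.piFinset fun j : Fin sstar => Finset.Icc 1 (m - w j)).filter
        (fun a => m - t + 1 ≤ ∑ j, a j ∧ ∑ j, a j ≤ m - t + sstar),
      (1/(b:ℝ) ^ (∑ j, a j)) ≤
    ((b:ℝ)^t / (b:ℝ)^(m+1)) * ((b:ℝ)/((b:ℝ)-1))^sstar * (b:ℝ)^sstar *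
      (((m - t).choose (sstar - 1) : ℕ) : ℝ) := by
  set n := m - t with hn
  set k := sstar - 1 with hk
  have hks : sstar = k + 1 := by omega
  have hkn : k ≤ n := by omega
  set F := (Fintype.piFinset fun j : Fin sstar => Finset.Icc 1 (m - w j)).filter
      (fun a => m - t + 1 ≤ ∑ j, a j ∧ ∑ j, a j ≤ m - t + sstar) with hF
  have hb1 : (1:ℝ) < (b:ℝ) := by exact_mod_cast (by omega : 1 < b)
  have hbpos : (0:ℝ) < (b:ℝ) := by linarith
  -- Step 1: pointwise bound
  have hstep1 : ∑ a ∈ F, (1/(b:ℝ) ^ (∑ j, a j)) ≤ F.card • (1/(b:ℝ) ^ (n + 1)) := by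
    refine Finset.sum_le_card_nsmul _ _ _ fun a ha => ?_
    have hge : n + 1 ≤ ∑ j, a j := (Finset.mem_filter.mp ha).2.1
    have hpow : (b:ℝ) ^ (n + 1) ≤ (b:ℝ) ^ (∑ j, a j) :=
      pow_le_pow_right₀ (le_of_lt hb1) hge
    exact one_div_le_one_div_of_le (pow_pos hbpos _) hpow
  -- Step 2: cardinality bound
  have hcard : F.card ≤ 2 ^ (2 * k + 1) * n.choose k := by
    have hmaps : ∀ a ∈ F, (∑ j, a j) ∈ Finset.Icc (n + 1) (n + sstar) := by
      intro a ha
      have h2 := (Finset.mem_filter.mp ha).2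
      exact Finset.mem_Icc.mpr ⟨h2.1, h2.2⟩
    rw [Finset.card_eq_sum_card_fiberwise hmaps]
    have hfiber : ∀ ℓ ∈ Finset.Icc (n + 1) (n + sstar),
        (F.filter fun a => ∑ j, a j = ℓ).card ≤ 2 ^ (k + (ℓ - (n + 1))) * n.choose k := by
      intro ℓ hℓ
      rw [Finset.mem_Icc] at hℓ
      have hsℓ : sstar ≤ ℓ := by omega
      have hstep2a : (F.filter fun a => ∑ j, a j = ℓ).card ≤
          (Finset.Nat.antidiagonalTuple sstar (ℓ - sstar)).card := by
        refine Finset.card_le_card_of_injOn (fun a j => a j - 1) ?_ ?_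
        · intro a ha
          dsimp only
          have hmem := Finset.mem_filter.mp ha
          have hsum : ∑ j, a j = ℓ := hmem.2
          have hone : ∀ j, 1 ≤ a j := by
            intro j
            have := (Fintype.mem_piFinset.mp (Finset.mem_filter.mp hmem.1).1) j
            exact (Finset.mem_Icc.mp this).1
          refine Finset.Nat.mem_antidiagonalTuple.mpr ?_
          have hplus : ∑ j, (a j - 1 + 1) = ∑ j, a j :=
            Finset.sum_congr rfl fun j _ => Nat.sub_add_cancel (hone j)
          rw [Finset.sum_add_distrib, Finset.sum_const, Finset.card_univ,
            Fintype.card_fin, smul_eq_mul, mul_one] at hplus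
          omega
        · intro a ha a' ha' hEq
          funext j
          have h1 : a j - 1 = a' j - 1 := by
            have := congrFun hEq j
            simpa using this
          have hone : 1 ≤ a j := by
            have := (Fintype.mem_piFinset.mp
              (Finset.mem_filter.mp (Finset.mem_filter.mp ha).1).1) j
            exact (Finset.mem_Icc.mp this).1
          have hone' : 1 ≤ a' j := by
            have := (Fintype.mem_piFinset.mp
              (Finset.mem_filter.mp (Finset.mem_filter.mp ha').1).1) j
            exact (Finset.mem_Icc.mp this).1
          omega
      have hstep2b : (Finset.Nat.antidiagonalTuple sstar (ℓ - sstar)).card ≤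
          (ℓ - 1).choose k := by
        clear hstep2a
        refine le_trans (aux_adt_card sstar (ℓ - sstar)) ?_
        have he : ℓ - sstar + sstar - 1 = ℓ - 1 := by omega
        rw [he]
        have hs := Nat.choose_symm (show k ≤ ℓ - 1 by omega)
        have he2 : ℓ - 1 - k = ℓ - sstar := by omega
        rw [he2] at hs
        rw [hs]
      have hstep2c : (ℓ - 1).choose k ≤ 2 ^ (k + (ℓ - (n + 1))) * n.choose k := by
        clear hstep2a
        have he : ℓ - 1 = n + (ℓ - (n + 1)) := by omega
        rw [he]
        calc (n + (ℓ - (n + 1))).choose k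
            ≤ (k + (ℓ - (n + 1))).choose (ℓ - (n + 1)) * n.choose k :=
              aux_ratio k n hkn _
          _ ≤ 2 ^ (k + (ℓ - (n + 1))) * n.choose k :=
              Nat.mul_le_mul_right _ (aux_choose_two_pow _ _)
      exact le_trans hstep2a (le_trans hstep2b hstep2c)
    calc ∑ ℓ ∈ Finset.Icc (n + 1) (n + sstar), (F.filter fun a => ∑ j, a j = ℓ).card
        ≤ ∑ ℓ ∈ Finset.Icc (n + 1) (n + sstar), 2 ^ (k + (ℓ - (n + 1))) * n.choose k :=
          Finset.sum_le_sum hfiber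
      _ = ∑ i ∈ Finset.range sstar, 2 ^ (k + i) * n.choose k := by
          rw [← Finset.Ico_add_one_right_eq_Icc, Finset.sum_Ico_eq_sum_range]
          have he : n + sstar + 1 - (n + 1) = sstar := by omega
          rw [he]
          refine Finset.sum_congr rfl fun i _ => ?_
          have he2 : n + 1 + i - (n + 1) = i := by omega
          rw [he2]
      _ ≤ 2 ^ (2 * k + 1) * n.choose k := by
          have h1 : ∑ i ∈ Finset.range sstar, 2 ^ (k + i) * n.choose k
              = (∑ i ∈ Finset.range sstar, 2 ^ i) * (2 ^ k * n.choose k) := by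
            rw [Finset.sum_mul]
            refine Finset.sum_congr rfl fun i _ => ?_
            rw [pow_add]; ring
          rw [h1]
          have h2 : (∑ i ∈ Finset.range sstar, 2 ^ i) ≤ 2 ^ sstar := aux_geom sstar
          calc (∑ i ∈ Finset.range sstar, 2 ^ i) * (2 ^ k * n.choose k)
              ≤ 2 ^ sstar * (2 ^ k * n.choose k) := Nat.mul_le_mul_right _ h2
            _ = 2 ^ (2 * k + 1) * n.choose k := by
                rw [← mul_assoc, ← pow_add, hks]
                congr 2
                omega
  -- Step 3: combine in ℝ
  have hC : (0:ℝ) ≤ (n.choose k : ℝ) := Nat.cast_nonneg _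
  have hBpos : (0:ℝ) < (b:ℝ) ^ (n + 1) := pow_pos hbpos _
  have hrhs : ((b:ℝ)^t / (b:ℝ)^(m+1)) * ((b:ℝ)/((b:ℝ)-1))^sstar * (b:ℝ)^sstar *
      ((n.choose k : ℕ) : ℝ)
      = (((b:ℝ)*(b:ℝ)/((b:ℝ)-1))^sstar * (n.choose k : ℝ)) * (1/(b:ℝ)^(n+1)) := by
    have hm1 : m + 1 = t + (n + 1) := by omega
    have hbne : (b:ℝ)^t ≠ 0 := by positivity
    rw [hm1, pow_add, div_mul_eq_div_div, div_self hbne]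
    ring
  rw [hrhs]
  have hfour : (4:ℝ) ≤ (b:ℝ)*(b:ℝ)/((b:ℝ)-1) := by
    have hb2 : (2:ℝ) ≤ (b:ℝ) := by exact_mod_cast hb
    rw [le_div_iff₀ (by linarith : (0:ℝ) < (b:ℝ)-1)]
    nlinarith [sq_nonneg ((b:ℝ) - 2)]
  have hkey : ((2:ℝ)) ^ (2 * k + 1) ≤ ((b:ℝ)*(b:ℝ)/((b:ℝ)-1))^sstar := by
    calc ((2:ℝ)) ^ (2 * k + 1) ≤ (2:ℝ) ^ (2 * sstar) := by
          refine pow_le_pow_right₀ (by norm_num) (by omega)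
      _ = (4:ℝ) ^ sstar := by
          rw [pow_mul]; norm_num
      _ ≤ ((b:ℝ)*(b:ℝ)/((b:ℝ)-1))^sstar :=
          pow_le_pow_left₀ (by norm_num) hfour sstar
  calc ∑ a ∈ F, (1/(b:ℝ) ^ (∑ j, a j))
      ≤ F.card • (1/(b:ℝ) ^ (n + 1)) := hstep1
    _ = (F.card : ℝ) * (1/(b:ℝ) ^ (n + 1)) := nsmul_eq_mul _ _
    _ ≤ ((2 ^ (2 * k + 1) * n.choose k : ℕ) : ℝ) * (1/(b:ℝ) ^ (n + 1)) := by
        refine mul_le_mul_of_nonneg_right ?_ (by positivity)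
        exact_mod_cast hcard
    _ ≤ (((b:ℝ)*(b:ℝ)/((b:ℝ)-1))^sstar * (n.choose k : ℝ)) * (1/(b:ℝ)^(n+1)) := by
        refine mul_le_mul_of_nonneg_right ?_ (by positivity)
        push_cast
        exact mul_le_mul_of_nonneg_right hkey hC
end

section
/- Let $b \ge 2$, $m \ge 1$, let $w_j \le m$ be nonnegative integers for $j$ in a nonempty finite set $\mathfrak{u}$, and define $T_v(x) = \lceil x b^v \rceil / b^v$ for $x \in (0,1]$. Let $P \subseteq [0,1)^{\mathfrak{u}}$ be a finite multiset of points all of whose $j$-th coordinates lie in $\{h/b^{m-w_j} : 0 \le h < b^{m-w_j}\}$. Then for every $\boldsymbol{x} = (x_j)_{j\in\mathfrak{u}} \in (0,1]^{\mathfrak{u}}$, with $\overline{x}_j = T_{m-w_j}(x_j)$: (a) $\#\{\boldsymbol{z} \in P : z_j < x_j \ \forall j\} = \#\{\boldsymbol{z} \in P : z_j < \overline{x}_j \ \forall j\}$; and (b) $\left|\prod_{j\in\mathfrak{u}} x_j - \prod_{j\in\mathfrak{u}} \overline{x}_j\right| \le 1 - \prod_{j\in\mathfrak{u}}\left(1 -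 \frac{1}{b^{m-w_j}}\right)$. -/
/-!
Rounding each coordinate up to the grid `b^{-(m - w_j)} ℤ` changes no comparison with a grid
point, since `h < x N ↔ h < ⌈x N⌉` for an integer `h`; this gives (a). For (b), the rounded
coordinate `y_j` satisfies `y_j - δ_j ≤ x_j ≤ y_j ≤ 1` with `δ_j = b^{-(m - w_j)} ≤ y_j`,
and `∏ y - ∏ (y - δ)` is at most `1 - ∏ (1 - δ)` by induction on the index set, peeling off
one factor via `y_a P - (y_a - δ_a) Q = y_a (P - Q) + δ_a Q`.
-/

section GridRounding

variable {x N : ℝ}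

lemma le_ceil_mul_div (hN : 0 < N) : x ≤ ⌈x * N⌉ / N := by
  rw [le_div_iff₀ hN]
  exact Int.le_ceil _

lemma ceil_mul_div_sub_inv_le (hN : 0 < N) : ⌈x * N⌉ / N - 1 / N ≤ x := by
  rw [div_sub_div_same, div_le_iff₀ hN]
  linarith [Int.ceil_lt_add_one (x * N)]

lemma inv_le_ceil_mul_div (hN : 0 < N) (hx : 0 < x) : 1 / N ≤ ⌈x * N⌉ / N := by
  gcongr
  exact_mod_cast Int.one_le_ceil_iff.mpr (mul_pos hx hN)

lemma ceil_mul_natCast_div_le_one {n : ℕ} (hn : 0 < n) (hx : x ≤ 1) :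
    (⌈x * n⌉ : ℝ) / n ≤ 1 := by
  have hn' : (0 : ℝ) < n := by exact_mod_cast hn
  rw [div_le_one hn']
  exact_mod_cast Int.ceil_le.mpr (by push_cast; nlinarith)

lemma intCast_div_lt_iff_lt_ceil_mul_div (hN : 0 < N) (h : ℤ) :
    h / N < x ↔ h / N < ⌈x * N⌉ / N := by
  rw [div_lt_div_iff_of_pos_right hN, div_lt_iff₀ hN, Int.cast_lt, Int.lt_ceil]

end GridRounding

theorem Finset.prod_sub_prod_sub_le_one_sub_prod {ι R : Type*} [CommRing R] [LinearOrder R]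
    [IsStrictOrderedRing R] (s : Finset ι) {y δ : ι → R}
    (hδ : ∀ j, 0 ≤ δ j) (hδy : ∀ j, δ j ≤ y j) (hy : ∀ j, y j ≤ 1) :
    ∏ j ∈ s, y j - ∏ j ∈ s, (y j - δ j) ≤ 1 - ∏ j ∈ s, (1 - δ j) := by
  induction s using Finset.cons_induction with
  | empty => simp
  | cons a s ha ih =>
    simp only [Finset.prod_cons]
    have hQP : ∏ j ∈ s, (y j - δ j) ≤ ∏ j ∈ s, y j :=
      Finset.prod_le_prod (fun j _ => sub_nonneg.mpr (hδy j))
        fun j _ => sub_le_self _ (hδ j)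
    have hQR : ∏ j ∈ s, (y j - δ j) ≤ ∏ j ∈ s, (1 - δ j) :=
      Finset.prod_le_prod (fun j _ => sub_nonneg.mpr (hδy j)) fun j _ => sub_le_sub_right (hy j) _
    have hPQ : y a * (∏ j ∈ s, y j - ∏ j ∈ s, (y j - δ j)) ≤
        ∏ j ∈ s, y j - ∏ j ∈ s, (y j - δ j) :=
      mul_le_of_le_one_left (sub_nonneg.mpr hQP) (hy a)
    have hδQ : δ a * ∏ j ∈ s, (y j - δ j) ≤ δ a * ∏ j ∈ s, (1 - δ j) :=
      mul_le_mul_of_nonneg_left hQR (hδ a)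
    linear_combination ih + hPQ + hδQ

theorem stmt17_general {ι : Type*} [Fintype ι] (b m : ℕ) (hb : 2 ≤ b)
    (w : ι → ℕ)
    (K : ℕ) (p : Fin K → ι → ℝ)
    (hp : ∀ k j, ∃ h : ℕ, h < b^(m - w j) ∧ p k j = (h:ℝ) / (b:ℝ)^(m - w j))
    (x : ι → ℝ) (hx : ∀ j, 0 < x j ∧ x j ≤ 1) :
    (Finset.univ.filter (fun k : Fin K => ∀ j, p k j < x j)).card =
      (Finset.univ.filter (fun k : Fin K => ∀ j,
        p k j < (⌈x j * (b:ℝ)^(m - w j)⌉ : ℝ) / (b:ℝ)^(m - w j))).card ∧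
    |(∏ j, x j) - ∏ j, (⌈x j * (b:ℝ)^(m - w j)⌉ : ℝ) / (b:ℝ)^(m - w j)| ≤
      1 - ∏ j, (1 - 1/(b:ℝ)^(m - w j)) := by
  have hN : ∀ j, (0 : ℝ) < (b : ℝ) ^ (m - w j) := fun j => by positivity
  set y : ι → ℝ := fun j => (⌈x j * (b:ℝ)^(m - w j)⌉ : ℝ) / (b:ℝ)^(m - w j)
  set δ : ι → ℝ := fun j => 1 / (b:ℝ)^(m - w j)
  have hxy : ∀ j, x j ≤ y j := fun j => le_ceil_mul_div (hN j)
  have hy : ∀ j, y j ≤ 1 := fun j => by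
    simpa only [y, Nat.cast_pow] using
      ceil_mul_natCast_div_le_one (n := b ^ (m - w j)) (by positivity) (hx j).2
  refine ⟨congrArg _ (Finset.filter_congr fun k _ => forall_congr' fun j => ?_), ?_⟩
  · obtain ⟨h, -, hpk⟩ := hp k j
    rw [hpk]
    simpa only [Int.cast_natCast] using intCast_div_lt_iff_lt_ceil_mul_div (hN j) h
  · have hyδx : ∏ j, (y j - δ j) ≤ ∏ j, x j :=
      Finset.prod_le_prod
        (fun j _ => sub_nonneg.mpr (inv_le_ceil_mul_div (hN j) (hx j).1))
        fun j _ => ceil_mul_div_sub_inv_le (hN j)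
    have hxy' : ∏ j, x j ≤ ∏ j, y j :=
      Finset.prod_le_prod (fun j _ => (hx j).1.le) fun j _ => hxy j
    have := Finset.univ.prod_sub_prod_sub_le_one_sub_prod (fun j => (by positivity : 0 ≤ δ j))
      (fun j => inv_le_ceil_mul_div (hN j) (hx j).1) hy
    rw [abs_sub_comm, abs_of_nonneg (sub_nonneg.mpr hxy')]
    linarith

theorem stmt17 {ι : Type*} [Fintype ι] [Nonempty ι] (b m : ℕ) (hb : 2 ≤ b) (hm : 1 ≤ m)
    (w : ι → ℕ) (hw : ∀ j, w j ≤ m)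
    (K : ℕ) (p : Fin K → ι → ℝ)
    (hp : ∀ k j, ∃ h : ℕ, h < b^(m - w j) ∧ p k j = (h:ℝ) / (b:ℝ)^(m - w j))
    (x : ι → ℝ) (hx : ∀ j, 0 < x j ∧ x j ≤ 1) :
    (Finset.univ.filter (fun k : Fin K => ∀ j, p k j < x j)).card =
      (Finset.univ.filter (fun k : Fin K => ∀ j,
        p k j < (⌈x j * (b:ℝ)^(m - w j)⌉ : ℝ) / (b:ℝ)^(m - w j))).card ∧
    |(∏ j, x j) - ∏ j, (⌈x j * (b:ℝ)^(m - w j)⌉ : ℝ) / (b:ℝ)^(m - w j)| ≤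
      1 - ∏ j, (1 - 1/(b:ℝ)^(m - w j)) :=
  stmt17_general b m hb w K p hp x hx
end
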